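/- Scaling joints along cone rays preserves infinitesimal rigidity data: if q_i = α_i p̄_i for nonzero scalars α_i, then the modified cone rigidity matrix R̄(G*o, q) is obtained from R̄(G*o, p̄*) by multiplying the row of edge {i,j} by α_i α_j, the coning row of {0,i} by α_i², and the columns of vertex i by 1/α_i. Consequently rank R̄(G*o,q) = rank R̄(G*o,p̄*) and their kernels are isomorphic via u_i ↦ α_i u_i (equivalently, u_i ↦ u_i/α_i). -/
import Mathlib


/-- The modified cone rigidity matrix `R̄(G*o, p̄)` (cone joint at the origin):
the edge row for `{i,j}` has `-p̄_j` at vertex `i` and `-p̄_i` at vertex `j`,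
and for each vertex `i` there is a coning row with `p̄_i` at vertex `i`. -/
def modifiedConeRigidityMatrix (n d : ℕ) (E : Finset (Fin n × Fin n))
    (pbar : Fin n → Fin (d + 1) → ℝ) :
    Matrix ({e // e ∈ E} ⊕ Fin n) (Fin n × Fin (d + 1)) ℝ :=
  fun r vk =>
    match r with
    | Sum.inl e =>
        (if vk.1 = (e : Fin n × Fin n).1 then -pbar (e : Fin n × Fin n).2 vk.2 else 0) +
        (if vk.1 = (e : Fin n × Fin n).2 then -pbar (e : Fin n × Fin n).1 vk.2 else 0)
    | Sum.inr i => if vk.1 = i then pbar i vk.2 else 0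

/-- scaling joints along cone rays.  If `q_i = α_i p̄_i` with all
`α_i ≠ 0`, then `R̄(G*o,q)` is obtained from `R̄(G*o,p̄)` by multiplying the row
of edge `{i,j}` by `α_i α_j`, the coning row of `{0,i}` by `α_i²`, and the
columns of vertex `i` by `1/α_i`; consequently the ranks agree and the kernels
are isomorphic via `u_i ↦ α_i u_i`. -/
theorem scaling_coneRays
    (n d : ℕ) (E : Finset (Fin n × Fin n)) (hE : ∀ e ∈ E, e.1 ≠ e.2)
    (pbar : Fin n → Fin (d + 1) → ℝ) (hp : ∀ i, pbar i ≠ 0)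
    (α : Fin n → ℝ) (hα : ∀ i, α i ≠ 0)
    (q : Fin n → Fin (d + 1) → ℝ) (hq : ∀ i k, q i k = α i * pbar i k) :
    (∀ (e : {e // e ∈ E}) (vk : Fin n × Fin (d + 1)),
        modifiedConeRigidityMatrix n d E q (Sum.inl e) vk =
          α (e : Fin n × Fin n).1 * α (e : Fin n × Fin n).2 * (α vk.1)⁻¹ *
            modifiedConeRigidityMatrix n d E pbar (Sum.inl e) vk) ∧
    (∀ (i : Fin n) (vk : Fin n × Fin (d + 1)),
        modifiedConeRigidityMatrix n d E q (Sum.inr i) vk =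
          (α i) ^ 2 * (α vk.1)⁻¹ *
            modifiedConeRigidityMatrix n d E pbar (Sum.inr i) vk) ∧
    (modifiedConeRigidityMatrix n d E q).rank =
      (modifiedConeRigidityMatrix n d E pbar).rank ∧
    ∀ u : Fin n × Fin (d + 1) → ℝ,
      (modifiedConeRigidityMatrix n d E pbar).mulVec u = 0 ↔
      (modifiedConeRigidityMatrix n d E q).mulVec (fun vk => α vk.1 * u vk) = 0 := by
  -- row scaling factors
  set c : ({e // e ∈ E} ⊕ Fin n) → ℝ := fun r =>
    match r with
    | Sum.inl e => α (e : Fin n × Fin n).1 * α (e : Fin n × Fin n).2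
    | Sum.inr i => (α i) ^ 2 with hc
  have hcne : ∀ r, c r ≠ 0 := by
    rintro (e | i)
    · exact mul_ne_zero (hα _) (hα _)
    · exact pow_ne_zero _ (hα _)
  have key : ∀ r vk, modifiedConeRigidityMatrix n d E q r vk =
      c r * (α vk.1)⁻¹ * modifiedConeRigidityMatrix n d E pbar r vk := by
    rintro (e | i) ⟨v, k⟩
    · have hne : (e : Fin n × Fin n).1 ≠ (e : Fin n × Fin n).2 := hE _ e.2
      simp only [modifiedConeRigidityMatrix, hc]
      by_cases h1 : v = (e : Fin n × Fin n).1
      · subst h1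
        rw [if_pos rfl, if_pos rfl, if_neg hne, if_neg hne]
        rw [hq]
        have h := inv_mul_cancel₀ (hα (e : Fin n × Fin n).1)
        linear_combination (α (e : Fin n × Fin n).2 * pbar (e : Fin n × Fin n).2 k) * h
      · rw [if_neg h1, if_neg h1]
        by_cases h2 : v = (e : Fin n × Fin n).2
        · subst h2
          rw [if_pos rfl, if_pos rfl, hq]
          have h := inv_mul_cancel₀ (hα (e : Fin n × Fin n).2)
          linear_combination (α (e : Fin n × Fin n).1 * pbar (e : Fin n × Fin n).1 k) * h
        · simp [h2]
    · simp only [modifiedConeRigidityMatrix, hc]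
      by_cases h1 : v = i
      · subst h1
        rw [if_pos rfl, if_pos rfl, hq]
        have h := inv_mul_cancel₀ (hα v)
        linear_combination (-(α v * pbar v k)) * h
      · simp [h1]
  have hmat : modifiedConeRigidityMatrix n d E q =
      Matrix.diagonal c * modifiedConeRigidityMatrix n d E pbar *
        Matrix.diagonal (fun vk : Fin n × Fin (d + 1) => (α vk.1)⁻¹) := by
    ext r vk
    rw [Matrix.mul_diagonal, Matrix.diagonal_mul, key]
    ring
  refine ⟨fun e vk => key (Sum.inl e) vk, fun i vk => key (Sum.inr i) vk, ?_, ?_⟩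
  · rw [hmat, Matrix.rank_mul_eq_left_of_isUnit_det, Matrix.rank_mul_eq_right_of_isUnit_det]
    · simp only [Matrix.det_diagonal]
      exact (Finset.prod_ne_zero_iff.mpr fun r _ => hcne r).isUnit
    · simp only [Matrix.det_diagonal]
      exact (Finset.prod_ne_zero_iff.mpr fun vk _ => inv_ne_zero (hα vk.1)).isUnit
  · intro u
    have hvec : (modifiedConeRigidityMatrix n d E q).mulVec (fun vk => α vk.1 * u vk) =
        fun r => c r * (modifiedConeRigidityMatrix n d E pbar).mulVec u r := by
      funext r
      simp only [Matrix.mulVec, dotProduct, Finset.mul_sum]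
      refine Finset.sum_congr rfl fun vk _ => ?_
      rw [key]
      have h := inv_mul_cancel₀ (hα vk.1)
      linear_combination (c r * modifiedConeRigidityMatrix n d E pbar r vk * u vk) * h
    rw [hvec]
    constructor
    · intro h
      funext r
      rw [congrFun h r]
      simp
    · intro h
      funext r
      have := congrFun h r
      simp only [Pi.zero_apply] at this ⊢
      exact (mul_eq_zero.mp this).resolve_left (hcne r)
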